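/- arXiv:2602.14741 — 4 statements merged into one kernel-verified Lean document; each statement's English description precedes it below -/
import Mathlib

section
/- For the affine attachment function f_δ(k)=k+δ with δ>0 and any λ>1, the series m_δ(λ) = ∑_{n≥1} ∏_{j=0}^{n-1} (j+δ)/(j+δ+λ) converges and equals δ/(λ−1). -/
/-!
Write `A n = ∏_{j<n} (j+δ)/(j+δ+λ)` and `c n = (n+δ) A n / (λ-1)`. Since
`A (n+1) = A n (n+δ)/(n+δ+λ)`, one checks `c n - c (n+1) = A (n+1)`, so the series telescopes to
`c 0 = δ/(λ-1)` provided `c n → 0`. The same identity reads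
`c n - c (n+1) = (λ-1)/(n+1+δ) · c (n+1)`: hence `c` decreases, and a positive limit `L` would
bound the divergent series `∑ (λ-1) L/(n+1+δ)` by the convergent telescoping one.
-/

open Finset Filter Topology

lemma hasSum_sub_succ_of_antitone {c : ℕ → ℝ} {l : ℝ} (hc : Antitone c)
    (hl : Tendsto c atTop (𝓝 l)) : HasSum (fun n => c n - c (n + 1)) (c 0 - l) := by
  rw [hasSum_iff_tendsto_nat_of_nonneg fun n => sub_nonneg.2 (hc n.le_succ)]
  simpa only [sum_range_sub'] using tendsto_const_nhds.sub hl

lemma hasSum_sub_succ_of_eq_mul_succ {c w : ℕ → ℝ} (hc : ∀ n, 0 ≤ c n) (hw : ∀ n, 0 ≤ w n)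
    (hw_not : ¬Summable w) (hstep : ∀ n, c n - c (n + 1) = w n * c (n + 1)) :
    HasSum (fun n => c n - c (n + 1)) (c 0) := by
  have hanti : Antitone c := antitone_nat_of_succ_le fun n => by
    linarith [hstep n, mul_nonneg (hw n) (hc (n + 1))]
  have hbdd : BddBelow (Set.range c) := ⟨0, Set.forall_mem_range.2 hc⟩
  have hsum := hasSum_sub_succ_of_antitone hanti (tendsto_atTop_ciInf hanti hbdd)
  suffices hL : ⨅ n, c n = 0 by rwa [hL, sub_zero] at hsum
  refine (le_ciInf hc).antisymm' (not_lt.1 fun hL => hw_not ?_)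
  refine (summable_mul_right_iff hL.ne').1 <|
    hsum.summable.of_nonneg_of_le (fun n => mul_nonneg (hw n) hL.le) fun n => ?_
  rw [hstep]
  exact mul_le_mul_of_nonneg_left (ciInf_le hbdd _) (hw n)

lemma not_summable_div_natCast_add {a : ℝ} (ha : a ≠ 0) (b : ℝ) :
    ¬Summable fun n : ℕ => a / (n + b) := by
  have h := (Real.summable_one_div_nat_add_rpow b 1).not.2 (lt_irrefl 1)
  simp only [Real.rpow_one, one_div, ← abs_inv, summable_abs_iff] at h
  simpa only [div_eq_mul_inv, summable_mul_left_iff ha] using h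

noncomputable def affineTail (δ lam : ℝ) (n : ℕ) : ℝ :=
  (n + δ) / (lam - 1) * ∏ j ∈ range n, ((j : ℝ) + δ) / ((j : ℝ) + δ + lam)

section AffineTail

variable {δ lam : ℝ}

lemma affineTail_zero : affineTail δ lam 0 = δ / (lam - 1) := by
  simp [affineTail]

variable (hδ : 0 ≤ δ) (hlam : 1 < lam)
include hδ hlam

lemma affineTail_nonneg (n : ℕ) : 0 ≤ affineTail δ lam n := by
  have : 0 < lam - 1 := sub_pos.2 hlam
  unfold affineTail
  positivity

lemma affineTail_sub_succ (n : ℕ) :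
    affineTail δ lam n - affineTail δ lam (n + 1) =
      ∏ j ∈ range (n + 1), ((j : ℝ) + δ) / ((j : ℝ) + δ + lam) := by
  have h1 : lam - 1 ≠ 0 := (sub_pos.2 hlam).ne'
  have h2 : (n : ℝ) + δ + lam ≠ 0 := by positivity
  simp only [affineTail, prod_range_succ, Nat.cast_succ]
  field_simp
  ring

lemma affineTail_sub_succ_eq_mul (n : ℕ) :
    affineTail δ lam n - affineTail δ lam (n + 1) =
      (lam - 1) / (n + 1 + δ) * affineTail δ lam (n + 1) := by
  have h1 : lam - 1 ≠ 0 := (sub_pos.2 hlam).ne'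
  have h2 : (n : ℝ) + 1 + δ ≠ 0 := by positivity
  rw [affineTail_sub_succ hδ hlam, affineTail, Nat.cast_succ]
  field_simp

end AffineTail

theorem affine_laplace_transform (δ lam : ℝ) (hδ : 0 < δ) (hlam : 1 < lam) :
    HasSum (fun n : ℕ => ∏ j ∈ Finset.range (n + 1), ((j : ℝ) + δ) / ((j : ℝ) + δ + lam))
      (δ / (lam - 1)) := by
  have hdiv : ¬Summable fun n : ℕ => (lam - 1) / (n + 1 + δ) := by
    simpa only [add_assoc] using not_summable_div_natCast_add (sub_pos.2 hlam).ne' (1 + δ)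
  have hsum := hasSum_sub_succ_of_eq_mul_succ (affineTail_nonneg hδ.le hlam)
    (fun n => div_nonneg (sub_pos.2 hlam).le (by positivity)) hdiv
    (affineTail_sub_succ_eq_mul hδ.le hlam)
  rw [affineTail_zero] at hsum
  simpa only [affineTail_sub_succ hδ.le hlam] using hsum
end

section
/- Let δ>0 and consider J(λ) = log((λ−1)/δ)/λ on (δ+1, ∞). Then J attains its supremum at the unique interior point λ* = 1 + 1/W(1/(δe)), and the supremum value is κ_δ = W(1/(δe)), where W is the principal branch of the Lambert W function. -/
/-!
The defining equation of `w` says `log (δ * w) = -(w + 1)`, and with it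
`log ((λ - 1) / δ) - w * λ = log y - (y - 1)` for `y = (λ - 1) * w`.
So `log y ≤ y - 1`, with equality only at `y = 1`, gives `J λ ≤ w`,
with equality exactly at `λ = 1 + 1 / w`.
-/

open Real

section

variable {δ w : ℝ}

lemma log_mul_eq_neg_add_one_of_mul_exp_eq (hδ : 0 < δ)
    (hW : w * exp w = 1 / (δ * exp 1)) : log (δ * w) = -(w + 1) := by
  have hδw : δ * w = exp (-(w + 1)) := by
    rw [neg_add, exp_add, exp_neg, exp_neg]
    field_simp at hW ⊢
    linarith
  rw [hδw, log_exp]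

lemma log_sub_one_div_sub_mul_eq (hδ : 0 < δ) (hw : 0 < w) (hδw : log (δ * w) = -(w + 1))
    {lam : ℝ} (hlam : 1 < lam) :
    log ((lam - 1) / δ) - w * lam = log ((lam - 1) * w) - ((lam - 1) * w - 1) := by
  have hlam' : lam - 1 ≠ 0 := by linarith
  rw [log_div hlam' hδ.ne', log_mul hlam' hw.ne']
  rw [log_mul hδ.ne' hw.ne'] at hδw
  linarith

lemma log_sub_one_div_le_mul (hδ : 0 < δ) (hw : 0 < w) (hδw : log (δ * w) = -(w + 1))
    {lam : ℝ} (hlam : 1 < lam) : log ((lam - 1) / δ) ≤ w * lam := by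
  have hy : 0 < (lam - 1) * w := mul_pos (by linarith) hw
  linarith [log_sub_one_div_sub_mul_eq hδ hw hδw hlam, log_le_sub_one_of_pos hy]

lemma log_sub_one_div_eq_mul_iff (hδ : 0 < δ) (hw : 0 < w) (hδw : log (δ * w) = -(w + 1))
    {lam : ℝ} (hlam : 1 < lam) :
    log ((lam - 1) / δ) = w * lam ↔ (lam - 1) * w = 1 := by
  have hy : 0 < (lam - 1) * w := mul_pos (by linarith) hw
  have hdecomp := log_sub_one_div_sub_mul_eq hδ hw hδw hlam
  constructor
  · intro heq
    by_contra hne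
    linarith [log_lt_sub_one_of_pos hy hne]
  · intro hone
    rw [hone, log_one] at hdecomp
    linarith

end

/-- `w` plays the role of `W(1/(δe))`, the principal Lambert `W` value at `1/(δe) > 0`:
it is the unique positive solution of `w * exp w = 1/(δ * e)`. -/
theorem affine_height_variational (δ : ℝ) (hδ : 0 < δ) (w : ℝ) (hw : 0 < w)
    (hW : w * Real.exp w = 1 / (δ * Real.exp 1)) :
    δ + 1 < 1 + 1 / w ∧
    Real.log (((1 + 1 / w) - 1) / δ) / (1 + 1 / w) = w ∧
    (∀ lam : ℝ, δ + 1 < lam → Real.log ((lam - 1) / δ) / lam ≤ w) ∧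
    (∀ lam : ℝ, δ + 1 < lam → Real.log ((lam - 1) / δ) / lam = w → lam = 1 + 1 / w) := by
  have hδw := log_mul_eq_neg_add_one_of_mul_exp_eq hδ hW
  have hδw_lt_one : δ * w < 1 :=
    (log_neg_iff (mul_pos hδ hw)).mp (by rw [hδw]; linarith)
  have hstar : 1 < 1 + 1 / w := by simp [hw]
  refine ⟨?_, ?_, fun lam hlam => ?_, fun lam hlam heq => ?_⟩
  · rw [add_comm 1, add_lt_add_iff_right, lt_div_iff₀ hw]
    exact hδw_lt_one
  · have hmax := (log_sub_one_div_eq_mul_iff hδ hw hδw hstar).mpr (by field_simp; ring)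
    rw [hmax, mul_div_cancel_right₀ _ (by positivity)]
  · have hlam0 : 0 < lam := by linarith
    rw [div_le_iff₀ hlam0]
    exact log_sub_one_div_le_mul hδ hw hδw (by linarith)
  · have hlam0 : 0 < lam := by linarith
    rw [div_eq_iff hlam0.ne'] at heq
    have hone := (log_sub_one_div_eq_mul_iff hδ hw hδw (by linarith)).mp heq
    field_simp
    linarith
end

section
/- The map δ ↦ 1/((δ+1)·W(1/(δe))) is strictly increasing on (0,∞), where W is the principal branch of the Lambert W function. -/
/-!
Put `w(δ) = W (1 / (δ e))`. The defining equation `w e^w = 1 / (δ e)` rewrites as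
`δ w = e^{-w-1}`, so `(δ + 1) w = e^{-w-1} + w`. The right-hand side is strictly increasing in
`w ≥ -1` (its derivative is `1 - e^{-w-1}`), while `w` strictly decreases in `δ` because
`W` inverts the strictly increasing map `x ↦ x e^x`. Hence `(δ + 1) w(δ)` strictly decreases
and its reciprocal strictly increases.
-/

open Real Set

lemma StrictMonoOn.of_leftInvOn {α β : Type*} [LinearOrder α] [Preorder β] {f : α → β}
    {g : β → α} {s : Set α} {t : Set β} (hf : StrictMonoOn f s) (hg : MapsTo g t s)
    (hfg : LeftInvOn f g t) : StrictMonoOn g t := by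
  intro x hx y hy hxy
  by_contra! hle
  have := hf.monotoneOn (hg hy) (hg hx) hle
  rw [hfg hx, hfg hy] at this
  exact hxy.not_ge this

lemma strictMonoOn_mul_exp : StrictMonoOn (fun x : ℝ => x * exp x) (Ici 0) :=
  fun _ _ _ hy hxy => mul_lt_mul hxy (exp_le_exp.mpr hxy.le) (exp_pos _) hy

lemma strictMonoOn_exp_neg_sub_one_add :
    StrictMonoOn (fun w : ℝ => exp (-w - 1) + w) (Ici (-1)) := by
  intro u (hu : -1 ≤ u) v _ huv
  have hexp_le_one : exp (-u - 1) ≤ 1 := exp_le_one_iff.mpr (by linarith)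
  have htangent : u - v + 1 < exp (u - v) := add_one_lt_exp (sub_ne_zero.mpr huv.ne)
  have hsplit : exp (-v - 1) = exp (-u - 1) * exp (u - v) := by rw [← exp_add]; ring_nf
  have hgap : 0 ≤ 1 - exp (u - v) := sub_nonneg.mpr (exp_le_one_iff.mpr (by linarith))
  show exp (-u - 1) + u < exp (-v - 1) + v
  -- `exp (-u - 1) - exp (-v - 1) = exp (-u - 1) * (1 - exp (u - v)) ≤ 1 - exp (u - v) < v - u`
  nlinarith [exp_pos (-u - 1)]

lemma mul_eq_exp_neg_sub_one {δ w : ℝ} (hδ : 0 < δ) (hw : w * exp w = 1 / (δ * exp 1)) :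
    δ * w = exp (-w - 1) := by
  rw [eq_div_iff (by positivity)] at hw
  have : δ * w * exp (w + 1) = 1 := by rw [exp_add]; linear_combination hw
  rw [show -w - 1 = -(w + 1) by ring, exp_neg]
  exact eq_inv_of_mul_eq_one_left this

/-- `W` is the principal branch of the Lambert W function; on the positive reals it is
characterised by `W x * exp (W x) = x` and `W x > 0`. The map
`δ ↦ 1/((δ+1) * W (1/(δ e)))` is strictly increasing on `(0,∞)`. -/
theorem affine_height_constant_strict_mono (W : ℝ → ℝ)
    (hW : ∀ x : ℝ, 0 < x → W x * Real.exp (W x) = x)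
    (hWpos : ∀ x : ℝ, 0 < x → 0 < W x) :
    StrictMonoOn (fun δ : ℝ => 1 / ((δ + 1) * W (1 / (δ * Real.exp 1)))) (Set.Ioi 0) := by
  have hW_mono : StrictMonoOn W (Ioi 0) :=
    strictMonoOn_mul_exp.of_leftInvOn (fun x hx => (hWpos x hx).le) hW
  intro a (ha : 0 < a) b (hb : 0 < b) hab
  have hxa : 0 < 1 / (a * exp 1) := by positivity
  have hxb : 0 < 1 / (b * exp 1) := by positivity
  have hwb_lt_wa : W (1 / (b * exp 1)) < W (1 / (a * exp 1)) :=
    hW_mono hxb hxa (one_div_lt_one_div_of_lt (by positivity) (by gcongr))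
  have hcross : (b + 1) * W (1 / (b * exp 1)) < (a + 1) * W (1 / (a * exp 1)) := by
    rw [add_one_mul, add_one_mul, mul_eq_exp_neg_sub_one hb (hW _ hxb),
      mul_eq_exp_neg_sub_one ha (hW _ hxa)]
    exact strictMonoOn_exp_neg_sub_one_add (mem_Ici.mpr (by linarith [hWpos _ hxb]))
      (mem_Ici.mpr (by linarith [hWpos _ hxa])) hwb_lt_wa
  exact one_div_lt_one_div_of_lt (mul_pos (by linarith) (hWpos _ hxb)) hcross
end

section
/- Let N be an ℕ-valued random variable with N≥1, c:ℕ→ℝ, S = ∑_{j=0}^{N-1} c_j, and suppose P(N>k+1)>0. Define μ_k = E[S | N>k], q_k = P(N=k+1 | N>k), and 𝓡_{k+1} = E[∑_{j=k+1}^{N-1} c_j | N>k+1]. Then μ_{k+1} − μ_k = q_k · 𝓡_{k+1}. -/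
/-! On `{N > k}` the sum `S` splits as the deterministic head `s = ∑_{j ≤ k} c_j` plus the tail
`R = ∑_{j=k+1}^{N-1} c_j`, and `R` vanishes on `{N = k + 1}`. Hence both `E[S; N > k]` and
`E[S; N > k + 1]` equal `s` times the measure of their event plus the same integral
`I = E[R; N > k + 1]`, and with `a = P(N > k) = P(N > k + 1) + P(N = k + 1) = b + c` the difference
of the conditional means is `I / b - I / a = (c / a) · (I / b)`. -/

open MeasureTheory Finset

theorem mul_add_div_sub_mul_add_div {b c s I : ℝ} (hb : b ≠ 0) (hbc : b + c ≠ 0) :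
    (b * s + I) / b - ((b + c) * s + I) / (b + c) = c / (b + c) * (I / b) := by
  field_simp
  ring

section SetIntegral

variable {Ω : Type*} [MeasurableSpace Ω] {μ : Measure Ω}

theorem setIntegral_eq_measureReal_mul_add {f g : Ω → ℝ} {s : Set Ω} (a : ℝ)
    (hs : MeasurableSet s) (hμs : μ s ≠ ⊤) (hf : IntegrableOn f s μ)
    (hfg : Set.EqOn f (fun ω => a + g ω) s) :
    ∫ ω in s, f ω ∂μ = μ.real s * a + ∫ ω in s, g ω ∂μ := by
  have hconst : IntegrableOn (fun _ => a) s μ := integrableOn_const hμs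
  have hg : IntegrableOn g s μ :=
    (hf.sub hconst).congr_fun (fun ω hω => by simp [hfg hω]) hs
  rw [setIntegral_congr_fun hs hfg, integral_add hconst hg, setIntegral_const, smul_eq_mul]

end SetIntegral

section RandomHorizon

variable {Ω : Type*} (N : Ω → ℕ) (k : ℕ)

theorem setOf_lt_eq_union :
    {ω | k < N ω} = {ω | k + 1 < N ω} ∪ {ω | N ω = k + 1} := by
  ext ω
  simp only [Set.mem_ofPred_eq, Set.mem_union]
  omega

theorem disjoint_setOf_succ_lt_setOf_eq :
    Disjoint {ω | k + 1 < N ω} {ω | N ω = k + 1} :=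
  Set.disjoint_left.2 fun ω (h : k + 1 < N ω) (h' : N ω = k + 1) => by omega

variable [MeasurableSpace Ω] (μ : Measure Ω)

theorem setIntegral_setOf_lt_sum_Ico (hN : Measurable N) (c : ℕ → ℝ) :
    ∫ ω in {ω | k < N ω}, ∑ j ∈ Ico (k + 1) (N ω), c j ∂μ
      = ∫ ω in {ω | k + 1 < N ω}, ∑ j ∈ Ico (k + 1) (N ω), c j ∂μ := by
  have hsub : {ω | k + 1 < N ω} ⊆ {ω | k < N ω} := fun _ h => Nat.lt_of_succ_lt h
  refine setIntegral_eq_of_subset_of_forall_sdiff_eq_zero (hN measurableSet_Ioi) hsub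
    fun ω hω => ?_
  have hω : N ω = k + 1 := by
    simp only [Set.mem_sdiff, Set.mem_ofPred_eq] at hω
    omega
  simp [hω]

variable [IsFiniteMeasure μ]

theorem measureReal_setOf_lt (hN : Measurable N) :
    μ.real {ω | k < N ω} = μ.real {ω | k + 1 < N ω} + μ.real {ω | N ω = k + 1} := by
  rw [setOf_lt_eq_union, measureReal_union (disjoint_setOf_succ_lt_setOf_eq N k)
    (hN (measurableSet_singleton _))]

theorem setIntegral_setOf_lt_sum_range (hN : Measurable N) (c : ℕ → ℝ)
    (hS : Integrable (fun ω => ∑ j ∈ range (N ω), c j) μ) {m : ℕ} (hkm : k ≤ m) :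
    ∫ ω in {ω | m < N ω}, ∑ j ∈ range (N ω), c j ∂μ
      = μ.real {ω | m < N ω} * ∑ j ∈ range (k + 1), c j
        + ∫ ω in {ω | m < N ω}, ∑ j ∈ Ico (k + 1) (N ω), c j ∂μ :=
  setIntegral_eq_measureReal_mul_add _ (hN measurableSet_Ioi) (measure_ne_top μ _)
    hS.integrableOn fun _ hω => (sum_range_add_sum_Ico c (hkm.trans_lt hω)).symm

end RandomHorizon

theorem increment_identity_general {Ω : Type*} [MeasurableSpace Ω]
    (μ : Measure Ω) [IsProbabilityMeasure μ]
    (N : Ω → ℕ) (hN : Measurable N)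
    (c : ℕ → ℝ)
    (hS : Integrable (fun ω => ∑ j ∈ Finset.range (N ω), c j) μ)
    (k : ℕ) (hpos : 0 < (μ {ω | k + 1 < N ω}).toReal) :
    (∫ ω in {ω | k + 1 < N ω}, ∑ j ∈ Finset.range (N ω), c j ∂μ) /
        (μ {ω | k + 1 < N ω}).toReal
      - (∫ ω in {ω | k < N ω}, ∑ j ∈ Finset.range (N ω), c j ∂μ) /
          (μ {ω | k < N ω}).toReal
    = ((μ {ω | N ω = k + 1}).toReal / (μ {ω | k < N ω}).toReal) *
        ((∫ ω in {ω | k + 1 < N ω}, ∑ j ∈ Finset.Ico (k + 1) (N ω), c j ∂μ) /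
          (μ {ω | k + 1 < N ω}).toReal) := by
  simp only [← measureReal_def] at hpos ⊢
  rw [setIntegral_setOf_lt_sum_range N k μ hN c hS le_rfl,
    setIntegral_setOf_lt_sum_range N k μ hN c hS k.le_succ,
    setIntegral_setOf_lt_sum_Ico N k μ hN, measureReal_setOf_lt N k μ hN]
  exact mul_add_div_sub_mul_add_div hpos.ne' (add_pos_of_pos_of_nonneg hpos measureReal_nonneg).ne'

theorem increment_identity {Ω : Type*} [MeasurableSpace Ω]
    (μ : Measure Ω) [IsProbabilityMeasure μ]
    (N : Ω → ℕ) (hN : Measurable N) (hN1 : ∀ ω, 1 ≤ N ω)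
    (c : ℕ → ℝ)
    (hS : Integrable (fun ω => ∑ j ∈ Finset.range (N ω), c j) μ)
    (k : ℕ) (hpos : 0 < (μ {ω | k + 1 < N ω}).toReal) :
    (∫ ω in {ω | k + 1 < N ω}, ∑ j ∈ Finset.range (N ω), c j ∂μ) /
        (μ {ω | k + 1 < N ω}).toReal
      - (∫ ω in {ω | k < N ω}, ∑ j ∈ Finset.range (N ω), c j ∂μ) /
          (μ {ω | k < N ω}).toReal
    = ((μ {ω | N ω = k + 1}).toReal / (μ {ω | k < N ω}).toReal) *
        ((∫ ω in {ω | k + 1 < N ω}, ∑ j ∈ Finset.Ico (k + 1) (N ω), c j ∂μ) /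
          (μ {ω | k + 1 < N ω}).toReal) :=
  increment_identity_general μ N hN c hS k hpos
end
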